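/- Let F be a field of characteristic ≠ 2 and let a, b ∈ M₂(F) be traceless matrices such that det(a×b) ≠ 0. Then the triple of matrices a, b, a×b is linearly independent over F. -/

import Mathlib

open Matrix

/-- The cross product of traceless 2×2 matrices: `a×b = (ab - ba)/2`. -/
noncomputable def matCross {F : Type*} [Field F] (a b : Matrix (Fin 2) (Fin 2) F) :
    Matrix (Fin 2) (Fin 2) F :=
  (2 : F)⁻¹ • (a * b - b * a)

/-!
Let `c = a×b`. The trace form `tr(x * c)` kills `a` and `b`, by cyclicity of the trace, while
`tr(c * c) = -2 det c ≠ 0` because `c` is traceless. So `c` lies outside the span of `a` and `b`,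
and `a, b` are independent since they do not commute (otherwise `c = 0`).
-/

theorem LinearIndependent.finSnoc_of_apply_eq_zero {K V : Type*} [DivisionRing K]
    [AddCommGroup V] [Module K V] {n : ℕ} {v : Fin n → V} (hv : LinearIndependent K v)
    {x : V} (φ : V →ₗ[K] K) (hφv : ∀ i, φ (v i) = 0) (hφx : φ x ≠ 0) :
    LinearIndependent K (Fin.snoc v x) := by
  refine hv.finSnoc fun hx => hφx ?_
  have hspan : Submodule.span K (Set.range v) ≤ LinearMap.ker φ :=
    Submodule.span_le.mpr (Set.range_subset_iff.mpr hφv)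
  exact hspan hx

theorem linearIndependent_pair_of_not_commute {K A : Type*} [Field K] [Ring A] [Algebra K A]
    {a b : A} (h : ¬Commute a b) : LinearIndependent K ![a, b] := by
  rw [LinearIndependent.pair_iff]
  intro s t hst
  have hs : Commute (s • a) b := by
    rw [eq_neg_of_add_eq_zero_left hst]
    exact ((Commute.refl b).smul_left t).neg_left
  have ht : Commute a (t • b) := by
    rw [eq_neg_of_add_eq_zero_right hst]
    exact ((Commute.refl a).smul_right s).neg_right
  constructor
  · by_contra hs0
    exact h ((Commute.smul_left_iff₀ hs0).mp hs)
  · by_contra ht0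
    exact h ((Commute.smul_right_iff₀ ht0).mp ht)

namespace Matrix

variable {n R : Type*} [Fintype n] [CommRing R]

theorem trace_mul_sub_mul (a b : Matrix n n R) : trace (a * b - b * a) = 0 := by
  rw [trace_sub, trace_mul_comm, sub_self]

theorem trace_mul_mul_sub_mul_left (a b : Matrix n n R) : trace (a * (a * b - b * a)) = 0 := by
  rw [Matrix.mul_sub, trace_sub, ← Matrix.mul_assoc, trace_mul_comm (a * a), trace_mul_comm a,
    Matrix.mul_assoc, sub_self]

theorem trace_mul_mul_sub_mul_right (a b : Matrix n n R) : trace (b * (a * b - b * a)) = 0 := by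
  rw [Matrix.mul_sub, trace_sub, ← Matrix.mul_assoc, trace_mul_comm b, sub_self]

theorem trace_mul_self_fin_two_of_trace_eq_zero {A : Matrix (Fin 2) (Fin 2) R}
    (h : A.trace = 0) : trace (A * A) = -2 * A.det := by
  rw [trace_fin_two] at h
  simp only [trace_fin_two, det_fin_two, mul_apply, Fin.sum_univ_two]
  linear_combination (A 0 0 + A 1 1) * h

end Matrix

theorem stmt7_general {F : Type*} [Field F] (h2 : (2 : F) ≠ 0)
    (a b : Matrix (Fin 2) (Fin 2) F)
    (hdet : (matCross a b).det ≠ 0) :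
    LinearIndependent F ![a, b, matCross a b] := by
  set c := matCross a b
  have hac : trace (a * c) = 0 := by
    simp only [c, matCross, Matrix.mul_smul, trace_smul, trace_mul_mul_sub_mul_left, smul_zero]
  have hbc : trace (b * c) = 0 := by
    simp only [c, matCross, Matrix.mul_smul, trace_smul, trace_mul_mul_sub_mul_right, smul_zero]
  have hcc : trace (c * c) ≠ 0 := by
    have hc : c.trace = 0 := by simp only [c, matCross, trace_smul, trace_mul_sub_mul, smul_zero]
    rw [trace_mul_self_fin_two_of_trace_eq_zero hc]
    exact mul_ne_zero (neg_ne_zero.mpr h2) hdet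
  have hab : ¬Commute a b := fun h => hdet (by simp [c, matCross, h.eq])
  have hsnoc : ![a, b, c] = Fin.snoc ![a, b] c := by simp
  rw [hsnoc]
  exact (linearIndependent_pair_of_not_commute hab).finSnoc_of_apply_eq_zero
    ((traceLinearMap (Fin 2) F F).comp (LinearMap.mulRight F c))
    (Fin.forall_fin_two.mpr ⟨hac, hbc⟩) hcc

/-- if `a, b` are traceless and `det(a×b) ≠ 0` then the triple
`a, b, a×b` is linearly independent. -/
theorem stmt7 {F : Type*} [Field F] (h2 : (2 : F) ≠ 0)
    (a b : Matrix (Fin 2) (Fin 2) F) (ha : a.trace = 0) (hb : b.trace = 0)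
    (hdet : (matCross a b).det ≠ 0) :
    LinearIndependent F ![a, b, matCross a b] :=
  stmt7_general h2 a b hdet
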